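/- arXiv:2508.19672 — 3 statements merged into one kernel-verified Lean document; each statement's English description precedes it below -/
import Mathlib

section
/- For every n ≥ 1 and every x ∈ [0,1], the ratio P_n(-x)/P_n(x) of Newman polynomials satisfies P_n(-x)/P_n(x) ≥ -n^{-1/2}. -/
noncomputable def NewmanP (n : ℕ) (x : ℝ) : ℝ :=
  ∏ i ∈ Finset.range n, (x + (Real.exp (-(1 / Real.sqrt n))) ^ i)

theorem newman_ratio_lower_bound (n : ℕ) (hn : 1 ≤ n) (x : ℝ)
    (hx : x ∈ Set.Icc (0 : ℝ) 1) :
    NewmanP n (-x) / NewmanP n x ≥ -(1 / Real.sqrt n) := by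
  obtain ⟨hx0, hx1⟩ := hx
  set t : ℝ := 1 / Real.sqrt n with ht
  have hs : (0 : ℝ) < Real.sqrt n := Real.sqrt_pos.2 (by exact_mod_cast hn)
  have ht0 : 0 < t := by positivity
  set ξ : ℝ := Real.exp (-t) with hξ
  have hξ0 : 0 < ξ := Real.exp_pos _
  have hξ1 : ξ < 1 := by
    rw [hξ, Real.exp_lt_one_iff]; linarith
  have hPpos : 0 < NewmanP n x := by
    refine Finset.prod_pos fun i _ => ?_
    have : (0:ℝ) < (Real.exp (-(1 / Real.sqrt n))) ^ i := by positivity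
    linarith
  have hkey : -t * NewmanP n x ≤ NewmanP n (-x) := by
    by_cases hcase : x ≤ ξ ^ (n - 1)
    · -- all factors nonneg
      have hnn : 0 ≤ NewmanP n (-x) := by
        refine Finset.prod_nonneg fun j hj => ?_
        have hj' : j ≤ n - 1 := Nat.le_sub_one_of_lt (Finset.mem_range.1 hj)
        have : ξ ^ (n - 1) ≤ ξ ^ j := pow_le_pow_of_le_one hξ0.le hξ1.le hj'
        have hxj : x ≤ ξ ^ j := le_trans hcase this
        have hb : Real.exp (-(1 / Real.sqrt n)) = ξ := rfl
        rw [hb]; linarith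
      nlinarith [mul_pos ht0 hPpos]
    · push_neg at hcase
      have hex : ∃ k, ξ ^ k < x := ⟨n - 1, hcase⟩
      set m := Nat.find hex with hm
      have hml : ξ ^ m < x := Nat.find_spec hex
      have hm0 : 0 < m := by
        rcases Nat.eq_zero_or_pos m with h0 | h0
        · exfalso; rw [h0] at hml; simp at hml; linarith
        · exact h0
      set i := m - 1 with hi
      have him : i + 1 = m := Nat.succ_pred_eq_of_pos hm0
      have hxi : x ≤ ξ ^ i := le_of_not_gt (Nat.find_min hex (by omega))
      have hxi1 : ξ ^ (i + 1) < x := by rw [him]; exact hml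
      have hmle : m ≤ n - 1 := Nat.find_min' hex hcase
      have hin : i ∈ Finset.range n := Finset.mem_range.2 (by omega)
      -- key factor bound : |(-x) + ξ^i| ≤ t * (x + ξ^i)
      have h1ξ : 1 - ξ ≤ t := by
        have := Real.add_one_le_exp (-t)
        rw [← hξ] at this; linarith
      have hfac : |(-x) + ξ ^ i| ≤ t * (x + ξ ^ i) := by
        rw [abs_of_nonneg (by linarith)]
        have h1 : ξ ^ i - x ≤ ξ ^ i * (1 - ξ) := by
          have : ξ ^ i * ξ = ξ ^ (i + 1) := (pow_succ ξ i).symm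
          nlinarith
        have h2 : ξ ^ i * (1 - ξ) ≤ ξ ^ i * t :=
          mul_le_mul_of_nonneg_left h1ξ (by positivity)
        nlinarith [mul_nonneg ht0.le hx0]
      -- other factors: |(-x) + ξ^j| ≤ x + ξ^j
      have hother : ∀ j, |(-x) + ξ ^ j| ≤ x + ξ ^ j := by
        intro j
        rw [abs_le]
        constructor <;> nlinarith [pow_pos hξ0 j]
      have habs : |NewmanP n (-x)| ≤ t * NewmanP n x := by
        have heq : |NewmanP n (-x)| = ∏ j ∈ Finset.range n, |(-x) + ξ ^ j| := by
          rw [NewmanP, Finset.abs_prod]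
        rw [heq, NewmanP]
        rw [← Finset.mul_prod_erase _ _ hin, ← Finset.mul_prod_erase _ _ hin,
          ← mul_assoc]
        refine mul_le_mul ?_ ?_ (Finset.prod_nonneg fun j _ => abs_nonneg _) ?_
        · exact hfac
        · exact Finset.prod_le_prod (fun j _ => abs_nonneg _) fun j _ => hother j
        · have h : (0:ℝ) ≤ x + ξ ^ i := by positivity
          exact mul_nonneg ht0.le h
      have := neg_abs_le (NewmanP n (-x))
      nlinarith
  rw [ge_iff_le, le_div_iff₀ hPpos]
  linarith
end

section
/- For every n ≥ 1 and every x ∈ [0,1] with x ≥ exp(-√n), and for every index j with 0 ≤ j ≤ n-1, it holds that P_n(-x)/P_n(x) ≥ -|ξ^j - x|/(ξ^j + x), where ξ = exp(-n^{-1/2}) and P_n is the n-th Newman polynomial. -/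
theorem newman_ratio_factor_bound (n : ℕ) (hn : 1 ≤ n) (x : ℝ)
    (hx : x ∈ Set.Icc (Real.exp (-Real.sqrt n)) 1) (j : ℕ) (hj : j ≤ n - 1) :
    NewmanP n (-x) / NewmanP n x ≥
      -(|(Real.exp (-(1 / Real.sqrt n))) ^ j - x| /
        ((Real.exp (-(1 / Real.sqrt n))) ^ j + x)) := by
  set ξ := Real.exp (-(1 / Real.sqrt n)) with hξdef
  have hξpos : 0 < ξ := Real.exp_pos _
  have hxpos : 0 < x := lt_of_lt_of_le (Real.exp_pos _) hx.1
  have hjn : j ∈ Finset.range n := Finset.mem_range.2 (by omega)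
  have hPpos : 0 < NewmanP n x :=
    Finset.prod_pos fun i _ => by positivity
  have hdpos : 0 < ξ ^ j + x := by positivity
  have hsplit : NewmanP n x = (x + ξ ^ j) * ∏ i ∈ (Finset.range n).erase j, (x + ξ ^ i) :=
    (Finset.mul_prod_erase _ _ hjn).symm
  have key : |NewmanP n (-x)| ≤ |ξ ^ j - x| * ∏ i ∈ (Finset.range n).erase j, (x + ξ ^ i) := by
    rw [NewmanP, Finset.abs_prod, ← Finset.mul_prod_erase _ _ hjn]
    have h1 : |(-x) + ξ ^ j| = |ξ ^ j - x| := by congr 1; ring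
    rw [h1]
    refine mul_le_mul_of_nonneg_left ?_ (abs_nonneg _)
    refine Finset.prod_le_prod (fun i _ => abs_nonneg _) (fun i _ => ?_)
    calc |(-x) + ξ ^ i| = |ξ ^ i - x| := by congr 1; ring
      _ ≤ |ξ ^ i| + |x| := abs_sub _ _
      _ = x + ξ ^ i := by
          rw [abs_of_pos (by positivity), abs_of_pos hxpos]; ring
  have hbound : |ξ ^ j - x| / (ξ ^ j + x) * NewmanP n x
      = |ξ ^ j - x| * ∏ i ∈ (Finset.range n).erase j, (x + ξ ^ i) := by
    rw [hsplit]; field_simp; ring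
  rw [ge_iff_le, le_div_iff₀ hPpos]
  calc -(|ξ ^ j - x| / (ξ ^ j + x)) * NewmanP n x
      = -(|ξ ^ j - x| / (ξ ^ j + x) * NewmanP n x) := by ring
    _ = -(|ξ ^ j - x| * ∏ i ∈ (Finset.range n).erase j, (x + ξ ^ i)) := by rw [hbound]
    _ ≤ -|NewmanP n (-x)| := neg_le_neg key
    _ ≤ NewmanP n (-x) := neg_abs_le _
end

section
/- Let r_n(x) = (P_n(x) - P_n(-x))/(P_n(x) + P_n(-x)) with P_n the n-th Newman polynomial. Then for all x ∈ [-1,1] where defined, r_n'(x) = 4 (P_n(x) P_n(-x))/(P_n(x)+P_n(-x))^2 · ∑_{i=0}^{n-1} ξ^i/(ξ^{2i} - x^2), where ξ = exp(-n^{-1/2}). -/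
noncomputable def newmanRat (n : ℕ) (x : ℝ) : ℝ :=
  (NewmanP n x - NewmanP n (-x)) / (NewmanP n x + NewmanP n (-x))

/-!
Write `P(x) = ∏ (x + aᵢ)` with `aᵢ = ξ^i > 0`. The quotient rule applied to
`(P(x) - P(-x)) / (P(x) + P(-x))` gives `2 (P'(x) P(-x) + P(x) P'(-x)) / (P(x) + P(-x))²`, and the
logarithmic derivative `P'/P = ∑ 1/(x + aᵢ)` turns the numerator into
`2 P(x) P(-x) ∑ (1/(x + aᵢ) + 1/(aᵢ - x)) = 4 P(x) P(-x) ∑ aᵢ/(aᵢ² - x²)`.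
The denominator is positive: for `y > 0` every factor satisfies `|aᵢ - y| < aᵢ + y`, so
`|P(-y)| < P(y)`.
-/

open Finset

theorem HasDerivAt.sub_comp_neg_div_add_comp_neg {P : ℝ → ℝ} {p q x : ℝ}
    (hp : HasDerivAt P p x) (hq : HasDerivAt P q (-x)) (hx : P x + P (-x) ≠ 0) :
    HasDerivAt (fun z => (P z - P (-z)) / (P z + P (-z)))
      (2 * (p * P (-x) + P x * q) / (P x + P (-x)) ^ 2) x := by
  have hneg : HasDerivAt (fun z => P (-z)) (-q) x := by
    simpa [Function.comp_def] using hq.comp x (hasDerivAt_neg x)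
  refine ((hp.fun_sub hneg).fun_div (hp.fun_add hneg) hx).congr_deriv ?_
  ring

section ProdAdd

variable {ι : Type*} (s : Finset ι) (a : ι → ℝ)

theorem hasDerivAt_prod_add [DecidableEq ι] (y : ℝ) :
    HasDerivAt (fun z => ∏ i ∈ s, (z + a i)) (∑ i ∈ s, ∏ j ∈ s.erase i, (y + a j)) y := by
  simpa using HasDerivAt.fun_finsetProd (u := s) fun i _ => (hasDerivAt_id y).add_const (a i)

theorem sum_prod_erase_add_eq_prod_mul_sum_inv [DecidableEq ι] {y : ℝ}
    (hy : ∀ i ∈ s, y + a i ≠ 0) :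
    ∑ i ∈ s, ∏ j ∈ s.erase i, (y + a j) = (∏ i ∈ s, (y + a i)) * ∑ i ∈ s, (y + a i)⁻¹ := by
  rw [mul_sum]
  refine sum_congr rfl fun i hi => ?_
  rw [← mul_prod_erase s _ hi, mul_comm (y + a i), mul_assoc, mul_inv_cancel₀ (hy i hi), mul_one]

theorem sum_inv_add_add_sum_inv_neg_add {x : ℝ} (hx : ∀ i ∈ s, (x + a i) * (-x + a i) ≠ 0) :
    ∑ i ∈ s, (x + a i)⁻¹ + ∑ i ∈ s, (-x + a i)⁻¹ = 2 * ∑ i ∈ s, a i / (a i ^ 2 - x ^ 2) := by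
  rw [← sum_add_distrib, mul_sum]
  refine sum_congr rfl fun i hi => ?_
  obtain ⟨h₁, h₂⟩ := mul_ne_zero_iff.1 (hx i hi)
  have h : a i ^ 2 - x ^ 2 ≠ 0 := by convert hx i hi using 1; ring
  field_simp
  ring

theorem prod_add_add_prod_neg_add_pos (ha : ∀ i ∈ s, 0 < a i) (y : ℝ) :
    0 < ∏ i ∈ s, (y + a i) + ∏ i ∈ s, (-y + a i) := by
  wlog hy : 0 ≤ y generalizing y
  · simpa [add_comm] using this (-y) (by linarith)
  have hpos : 0 < ∏ i ∈ s, (y + a i) := prod_pos fun i hi => by linarith [ha i hi]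
  rcases le_or_gt 0 (∏ i ∈ s, (-y + a i)) with hneg | hneg
  · linarith
  rcases hy.eq_or_lt with rfl | hy
  · simp only [neg_zero] at hneg; linarith
  have hs : s.Nonempty := nonempty_iff_ne_empty.2 fun h => by simp [h] at hneg; linarith
  have hfac : ∀ i ∈ s, -y + a i ≠ 0 := prod_ne_zero_iff.1 hneg.ne
  have habs : |∏ i ∈ s, (-y + a i)| < ∏ i ∈ s, (y + a i) := by
    rw [abs_prod]
    exact prod_lt_prod_of_nonempty (fun i hi => abs_pos.2 (hfac i hi))
      (fun i hi => abs_lt.2 ⟨by linarith [ha i hi], by linarith⟩) hs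
  linarith [neg_abs_le (∏ i ∈ s, (-y + a i))]

end ProdAdd

theorem newman_rat_deriv_general (n : ℕ) (x : ℝ)
    (hne : ∀ i ∈ Finset.range n, x ^ 2 ≠ (Real.exp (-(1 / Real.sqrt n))) ^ (2 * i)) :
    deriv (newmanRat n) x =
      4 * (NewmanP n x * NewmanP n (-x)) / (NewmanP n x + NewmanP n (-x)) ^ 2 *
        ∑ i ∈ Finset.range n,
          (Real.exp (-(1 / Real.sqrt n))) ^ i /
            ((Real.exp (-(1 / Real.sqrt n))) ^ (2 * i) - x ^ 2) := by
  set ξ := Real.exp (-(1 / Real.sqrt n))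
  have hpos : ∀ i ∈ range n, 0 < ξ ^ i := fun i _ => pow_pos (Real.exp_pos _) i
  have hfac : ∀ i ∈ range n, (x + ξ ^ i) * (-x + ξ ^ i) ≠ 0 := fun i hi h =>
    hne i hi (by rw [pow_mul']; linear_combination -h)
  have hr : HasDerivAt (newmanRat n) _ x :=
    (hasDerivAt_prod_add (range n) (ξ ^ ·) x).sub_comp_neg_div_add_comp_neg
      (hasDerivAt_prod_add (range n) (ξ ^ ·) (-x))
      (prod_add_add_prod_neg_add_pos (range n) (ξ ^ ·) hpos x).ne'
  have hsum := sum_inv_add_add_sum_inv_neg_add (range n) (ξ ^ ·) hfac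
  simp only [← pow_mul'] at hsum
  rw [hr.deriv, sum_prod_erase_add_eq_prod_mul_sum_inv _ _ fun i hi => left_ne_zero_of_mul (hfac i hi),
    sum_prod_erase_add_eq_prod_mul_sum_inv _ _ fun i hi => right_ne_zero_of_mul (hfac i hi)]
  unfold NewmanP
  linear_combination 2 * (∏ i ∈ range n, (x + ξ ^ i)) * (∏ i ∈ range n, (-x + ξ ^ i)) /
    (∏ i ∈ range n, (x + ξ ^ i) + ∏ i ∈ range n, (-x + ξ ^ i)) ^ 2 * hsum

theorem newman_rat_deriv (n : ℕ) (hn : 1 ≤ n) (x : ℝ) (hx : x ∈ Set.Icc (-1 : ℝ) 1)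
    (hne : ∀ i ∈ Finset.range n, x ^ 2 ≠ (Real.exp (-(1 / Real.sqrt n))) ^ (2 * i)) :
    deriv (newmanRat n) x =
      4 * (NewmanP n x * NewmanP n (-x)) / (NewmanP n x + NewmanP n (-x)) ^ 2 *
        ∑ i ∈ Finset.range n,
          (Real.exp (-(1 / Real.sqrt n))) ^ i /
            ((Real.exp (-(1 / Real.sqrt n))) ^ (2 * i) - x ^ 2) :=
  newman_rat_deriv_general n x hne
end
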